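/- arXiv:1803.07772 — 4 statements merged into one kernel-verified Lean document; each statement's English description precedes it below -/
import Mathlib

section
/- Suppose p* ∈ S maximizes the energy efficiency with value E* = R(p*)/P(p*). Let Eⁱ ∈ ℝ, let pⁱ ∈ S be a maximizer of p ↦ R(p) − Eⁱ·P(p) over S, suppose R(pⁱ) − Eⁱ·P(pⁱ) > 0, and set Eⁱ⁺¹ = R(pⁱ)/P(pⁱ). Then Eⁱ < Eⁱ⁺¹ ≤ E*; that is, the Dinkelbach-type iterative update strictly increases the energy-efficiency value while never exceeding the optimal value. (Core step of Proposition 1.) -/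
theorem dinkelbach_iteration_step_general {S : Type*}
    (R P : S → ℝ) (hP : ∀ p, 0 < P p)
    (pstar : S) (hmax : ∀ p, R p / P p ≤ R pstar / P pstar)
    (Estar : ℝ) (hEs : Estar = R pstar / P pstar)
    (Ei : ℝ) (pi : S)
    (hpos : 0 < R pi - Ei * P pi)
    (Ei1 : ℝ) (hEi1 : Ei1 = R pi / P pi) :
    Ei < Ei1 ∧ Ei1 ≤ Estar := by
  subst hEi1 hEs
  exact ⟨(lt_div_iff₀ (hP pi)).2 (sub_pos.1 hpos), hmax pi⟩

/-- Core step of Proposition 1: the Dinkelbach-type update `Eⁱ⁺¹ = R(pⁱ)/P(pⁱ)`, where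
`pⁱ` maximizes `p ↦ R(p) - Eⁱ·P(p)` with positive optimal value, strictly increases the
energy-efficiency value while never exceeding the optimal value `E*`. -/
theorem dinkelbach_iteration_step {S : Type*}
    (R P : S → ℝ) (hP : ∀ p, 0 < P p)
    (pstar : S) (hmax : ∀ p, R p / P p ≤ R pstar / P pstar)
    (Estar : ℝ) (hEs : Estar = R pstar / P pstar)
    (Ei : ℝ) (pi : S) (hpi : ∀ p, R p - Ei * P p ≤ R pi - Ei * P pi)
    (hpos : 0 < R pi - Ei * P pi)
    (Ei1 : ℝ) (hEi1 : Ei1 = R pi / P pi) :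
    Ei < Ei1 ∧ Ei1 ≤ Estar :=
  dinkelbach_iteration_step_general R P hP pstar hmax Estar hEs Ei pi hpos Ei1 hEi1
end

section
/- Assume that for every real E the function p ↦ R(p) − E·P(p) attains its maximum over S, and that the energy efficiency R/P attains its maximum E* over S. Then for a real number E with a maximizer of p ↦ R(p) − E·P(p) over S, the optimal value max_{p∈S} (R(p) − E·P(p)) equals 0 if and only if E = E*. (Characterization underlying Theorem 1 and the stopping criterion of the iterative algorithm.) -/
/-!
Since `P > 0`, the sign of `R p - E * P p` is the sign of `R p / P p - E`. Hence the optimal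
value of the subtractive problem is `≤ 0` iff `E` bounds every efficiency from above, and `≥ 0`
iff some efficiency reaches `E`; both hold iff `E` is the maximal efficiency.
-/

section Subtractive

variable {S : Type*} {R P : S → ℝ} {E : ℝ} {pE : S}

theorem sub_mul_nonpos_iff_div_le {r p E : ℝ} (hp : 0 < p) : r - E * p ≤ 0 ↔ r / p ≤ E := by
  rw [div_le_iff₀ hp, sub_nonpos]

theorem sub_mul_nonneg_iff_le_div {r p E : ℝ} (hp : 0 < p) : 0 ≤ r - E * p ↔ E ≤ r / p := by
  rw [le_div_iff₀ hp, sub_nonneg]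

theorem subtractive_max_nonpos_iff (hP : ∀ p, 0 < P p)
    (hpE : ∀ p, R p - E * P p ≤ R pE - E * P pE) :
    R pE - E * P pE ≤ 0 ↔ ∀ p, R p / P p ≤ E :=
  ⟨fun h p => (sub_mul_nonpos_iff_div_le (hP p)).1 ((hpE p).trans h),
    fun h => (sub_mul_nonpos_iff_div_le (hP pE)).2 (h pE)⟩

theorem subtractive_max_nonneg_iff (hP : ∀ p, 0 < P p)
    (hpE : ∀ p, R p - E * P p ≤ R pE - E * P pE) :
    0 ≤ R pE - E * P pE ↔ ∃ p, E ≤ R p / P p :=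
  ⟨fun h => ⟨pE, (sub_mul_nonneg_iff_le_div (hP pE)).1 h⟩,
    fun ⟨p, hp⟩ => ((sub_mul_nonneg_iff_le_div (hP p)).2 hp).trans (hpE p)⟩

theorem eq_max_iff_upperBound_and_attained {f : S → ℝ} {pstar : S}
    (hmax : ∀ p, f p ≤ f pstar) : ((∀ p, f p ≤ E) ∧ ∃ p, E ≤ f p) ↔ E = f pstar :=
  ⟨fun ⟨hub, p, hp⟩ => le_antisymm (hp.trans (hmax p)) (hub pstar),
    fun h => ⟨fun p => h ▸ hmax p, pstar, h.le⟩⟩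

end Subtractive

theorem subtractive_value_zero_iff_general {S : Type*}
    (R P : S → ℝ) (hP : ∀ p, 0 < P p)
    (pstar : S) (hmax : ∀ p, R p / P p ≤ R pstar / P pstar)
    (Estar : ℝ) (hEs : Estar = R pstar / P pstar)
    (E : ℝ) (pE : S) (hpE : ∀ p, R p - E * P p ≤ R pE - E * P pE) :
    R pE - E * P pE = 0 ↔ E = Estar := by
  rw [le_antisymm_iff, subtractive_max_nonpos_iff hP hpE, subtractive_max_nonneg_iff hP hpE,
    eq_max_iff_upperBound_and_attained hmax, hEs]

/-- Characterization underlying Theorem 1 and the stopping criterion: assuming every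
subtractive problem `max_{p∈S} R(p) - E·P(p)` attains its maximum and the energy
efficiency `R/P` attains its maximum `E*`, the optimal value of the subtractive problem
at parameter `E` equals `0` if and only if `E = E*`. -/
theorem subtractive_value_zero_iff {S : Type*} [Nonempty S]
    (R P : S → ℝ) (hP : ∀ p, 0 < P p)
    (hatt : ∀ E : ℝ, ∃ q : S, ∀ p, R p - E * P p ≤ R q - E * P q)
    (pstar : S) (hmax : ∀ p, R p / P p ≤ R pstar / P pstar)
    (Estar : ℝ) (hEs : Estar = R pstar / P pstar)
    (E : ℝ) (pE : S) (hpE : ∀ p, R p - E * P p ≤ R pE - E * P pE) :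
    R pE - E * P pE = 0 ↔ E = Estar :=
  subtractive_value_zero_iff_general R P hP pstar hmax Estar hEs E pE hpE
end

section
/- Let z₀ > 0 and define α = z₀/(1 + z₀) and β = log(1 + z₀) − α·log(z₀) (logarithms to any fixed base, e.g. the natural logarithm). Then for every z > 0, α·log(z) + β ≤ log(1 + z), and equality holds at z = z₀. (The SCALE lower bound.) -/
open Real

/-- Concavity of `log`, applied at the points `z (1 + z₀) / z₀` and `1 + z₀` with weights
`z₀ / (1 + z₀)` and `1 / (1 + z₀)`, whose weighted mean is `1 + z`. -/
theorem div_one_add_mul_log_sub_log_le {z0 z : ℝ} (hz0 : 0 < z0) (hz : 0 < z) :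
    z0 / (1 + z0) * (log z - log z0) ≤ log (1 + z) - log (1 + z0) := by
  have h1z0 : 0 < 1 + z0 := by linarith
  have hweight : 0 ≤ 1 - z0 / (1 + z0) := by
    rw [one_sub_div h1z0.ne', add_sub_cancel_right]
    positivity
  have hmean : z0 / (1 + z0) * (z * (1 + z0) / z0) + (1 - z0 / (1 + z0)) * (1 + z0) = 1 + z := by
    field_simp
    ring
  have hconc := strictConcaveOn_log_Ioi.concaveOn.2
    (Set.mem_Ioi.2 (by positivity : 0 < z * (1 + z0) / z0)) (Set.mem_Ioi.2 h1z0)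
    (by positivity) hweight (add_sub_cancel _ _)
  simp only [smul_eq_mul] at hconc
  rw [hmean, log_div (by positivity) hz0.ne', log_mul hz.ne' h1z0.ne'] at hconc
  linarith

/-- The SCALE lower bound: with `α = z₀/(1 + z₀)` and `β = log(1 + z₀) - α·log z₀`
(for `z₀ > 0`), one has `α·log z + β ≤ log(1 + z)` for all `z > 0`, with equality
at `z = z₀`. -/
theorem scale_lower_bound (z0 : ℝ) (hz0 : 0 < z0) (α β : ℝ)
    (hα : α = z0 / (1 + z0))
    (hβ : β = Real.log (1 + z0) - α * Real.log z0) :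
    (∀ z : ℝ, 0 < z → α * Real.log z + β ≤ Real.log (1 + z)) ∧
    α * Real.log z0 + β = Real.log (1 + z0) := by
  subst hα hβ
  refine ⟨fun z hz => ?_, by ring⟩
  linarith [div_one_add_mul_log_sub_log_le hz0 hz]
end

section
/- Let M (the set of RRHs) and N (the set of subcarriers) be nonempty finite types and let p : M → N → ℝ be a family of transmit powers for a fixed user. Then p(m, n) · p(m', n') = 0 for all m ≠ m' and all n, n' if and only if there exists m₀ ∈ M such that p(m, n) = 0 for every m ≠ m₀ and every n. (Equivalence of the RRH-selection constraints C5–C6 with the product constraint (10).) -/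
section RowSupport

variable {M N R : Type*} [MulZeroClass R] {p : M → N → R}

theorem exists_forall_ne_eq_zero_of_mul_eq_zero [NoZeroDivisors R] [Nonempty M]
    (h : ∀ m m' : M, m ≠ m' → ∀ n n' : N, p m n * p m' n' = 0) :
    ∃ m₀ : M, ∀ m : M, m ≠ m₀ → ∀ n : N, p m n = 0 := by
  rcases em (∃ m₀ n₀, p m₀ n₀ ≠ 0) with ⟨m₀, n₀, hne⟩ | hzero
  · exact ⟨m₀, fun m hm n => (mul_eq_zero.mp (h m m₀ hm n n₀)).resolve_right hne⟩
  · exact ⟨Classical.arbitrary M, fun m _ n => not_not.mp fun hne => hzero ⟨m, n, hne⟩⟩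

theorem mul_eq_zero_of_forall_ne_eq_zero {m₀ : M} (h : ∀ m : M, m ≠ m₀ → ∀ n : N, p m n = 0)
    {m m' : M} (hmm' : m ≠ m') (n n' : N) : p m n * p m' n' = 0 := by
  by_cases hm : m = m₀
  · rw [h m' (hm ▸ hmm'.symm) n', mul_zero]
  · rw [h m hm n, zero_mul]

end RowSupport

theorem rrh_selection_iff_general {M N : Type*} [Nonempty M]
    (p : M → N → ℝ) :
    (∀ m m' : M, m ≠ m' → ∀ n n' : N, p m n * p m' n' = 0) ↔
    ∃ m₀ : M, ∀ m : M, m ≠ m₀ → ∀ n : N, p m n = 0 :=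
  ⟨exists_forall_ne_eq_zero_of_mul_eq_zero,
    fun ⟨_, h⟩ _ _ hmm' => mul_eq_zero_of_forall_ne_eq_zero h hmm'⟩

/-- Equivalence of the RRH-selection constraints C5–C6 with the product constraint
(10): the powers of a fixed user satisfy `p(m,n)·p(m',n') = 0` for all `m ≠ m'` and
all `n, n'` iff there is a single RRH `m₀` such that `p(m,n) = 0` whenever `m ≠ m₀`. -/
theorem rrh_selection_iff {M N : Type*} [Finite M] [Finite N] [Nonempty M] [Nonempty N]
    (p : M → N → ℝ) :
    (∀ m m' : M, m ≠ m' → ∀ n n' : N, p m n * p m' n' = 0) ↔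
    ∃ m₀ : M, ∀ m : M, m ≠ m₀ → ∀ n : N, p m n = 0 :=
  rrh_selection_iff_general p
end
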